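/- Let T > 0, let b : [0,∞) → [0,∞) be measurable and bounded on [0,T], and let K be a Markov kernel from [0,∞) to [0,∞). Define, for continuous S : [0,T] → ℝ, the map (𝒜S)(t) = exp(−∫₀ᵗ b(u)du) + exp(−∫₀ᵗ b(u)du) · ∫₀ᵗ b(s) exp(∫₀ˢ b(u)du) (∫_{[0,T−s)} S(s+v) K(s,dv)) ds, t ∈ [0,T]. Then: (i) if S is continuous with S(0) = 1 and 0 ≤ S(t) ≤ 1 for all t ∈ [0,T], then 𝒜S is continuous with (𝒜S)(0) = 1 and 0 ≤ (𝒜S)(t) ≤ 1 for all t ∈ [0,T]; (ii) for any two continuous functions S₁, S₂ : [0,T] → ℝ, sup_{t∈[0,T]} |(𝒜S₁)(t) − (𝒜S₂)(t)| ≤ sup_{t∈[0,T]} |S₁(t) − S₂(t)|. -/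

import Mathlib

open MeasureTheory ProbabilityTheory Filter Topology

/-- The fixed-point map `𝒜` from the proof of Theorem 4.1:
`(𝒜S)(t) = e^{-∫₀ᵗ b} + e^{-∫₀ᵗ b} ∫₀ᵗ b(s) e^{∫₀ˢ b} (∫_{[0,T-s)} S(s+v) K(s,dv)) ds`. -/
noncomputable def scaleMap (T : ℝ) (b : ℝ → ℝ) (K : ProbabilityTheory.Kernel ℝ ℝ)
    (S : ℝ → ℝ) (t : ℝ) : ℝ :=
  Real.exp (-(∫ u in (0:ℝ)..t, b u)) +
    Real.exp (-(∫ u in (0:ℝ)..t, b u)) *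
      ∫ s in (0:ℝ)..t, b s * Real.exp (∫ u in (0:ℝ)..s, b u) *
        (∫ v in Set.Ico (0:ℝ) (T - s), S (s + v) ∂(K s))

/-!
Write `B(t) = ∫₀ᵗ b`. Since `e^B` is absolutely continuous with derivative `b e^B` a.e., the
weight `b(s) e^{B(s)}` has total mass `e^{B(t)} - 1` on `[0,t]`. So if the inner integrals
`∫_{[0,T-s)} S(s+v) K(s,dv)` are bounded by `M` (as they are by `sup |S|`, `K(s)` being a
probability measure), the second summand of `(𝒜S)(t)` is bounded by `(1 - e^{-B(t)}) M`. With
`M = 1` this gives `(𝒜S)(t) ∈ [0,1]`; applied to `S₁ - S₂`, using linearity, it gives the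
nonexpansiveness estimate.
-/

open Set intervalIntegral
open scoped NNReal

theorem LipschitzOnWith.comp_absolutelyContinuousOnInterval {X Y : Type*}
    [PseudoMetricSpace X] [PseudoMetricSpace Y] {g : X → Y} {f : ℝ → X} {K : ℝ≥0} {s : Set X}
    {a b : ℝ} (hg : LipschitzOnWith K g s) (hf : AbsolutelyContinuousOnInterval f a b)
    (hfs : MapsTo f (uIcc a b) s) : AbsolutelyContinuousOnInterval (g ∘ f) a b := by
  unfold AbsolutelyContinuousOnInterval at hf ⊢
  refine squeeze_zero' (Eventually.of_forall fun E => Finset.sum_nonneg fun i _ => dist_nonneg)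
    ?_ (mul_zero (K : ℝ) ▸ hf.const_mul (K : ℝ))
  filter_upwards [mem_inf_of_right (mem_principal_self _)] with E hE
  rw [Finset.mul_sum]
  exact Finset.sum_le_sum fun i hi =>
    hg.dist_le_mul _ (hfs (hE.1 i hi).1) _ (hfs (hE.1 i hi).2)

theorem Measurable.intervalIntegrable_of_nonneg_of_le {b : ℝ → ℝ} {T C t : ℝ}
    (hb : Measurable b) (hb0 : ∀ x, 0 ≤ b x) (hC : ∀ x ∈ Icc 0 T, b x ≤ C) (ht : t ∈ Icc 0 T) :
    IntervalIntegrable b volume 0 t := by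
  refine (intervalIntegrable_iff_integrableOn_Icc_of_le ht.1).2 <|
    Measure.integrableOn_of_bounded measure_Icc_lt_top.ne hb.aestronglyMeasurable (M := C) ?_
  refine (ae_restrict_iff' measurableSet_Icc).2 (ae_of_all _ fun x hx => ?_)
  rw [Real.norm_eq_abs, abs_of_nonneg (hb0 x)]
  exact hC x (Icc_subset_Icc_right ht.2 hx)

section WeightedIntegral

variable {b : ℝ → ℝ} {a t : ℝ}

theorem integral_mul_exp_integral (hb : IntervalIntegrable b volume a t) :
    ∫ s in a..t, b s * Real.exp (∫ u in a..s, b u) = Real.exp (∫ u in a..t, b u) - 1 := by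
  set B : ℝ → ℝ := fun x => ∫ u in a..x, b u
  have hB : AbsolutelyContinuousOnInterval B a t :=
    hb.absolutelyContinuousOnInterval_intervalIntegral left_mem_uIcc
  obtain ⟨R, hR⟩ := hB.exists_bound
  obtain ⟨L, hL⟩ := Real.contDiff_exp.contDiffOn.exists_lipschitzOnWith (s := Icc (-R) R)
    one_ne_zero (convex_Icc _ _) isCompact_Icc
  have hexpB : AbsolutelyContinuousOnInterval (Real.exp ∘ B) a t :=
    hL.comp_absolutelyContinuousOnInterval hB fun x hx => abs_le.1 (hR x hx)
  have hderiv : ∀ᵐ x, x ∈ uIoc a t → deriv (Real.exp ∘ B) x = b x * Real.exp (B x) := by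
    filter_upwards [hb.ae_hasDerivAt_integral] with x hx hxt
    exact ((hx (uIoc_subset_uIcc hxt) a left_mem_uIcc).exp.deriv).trans (mul_comm _ _)
  rw [← integral_congr_ae hderiv, hexpB.integral_deriv_eq_sub]
  simp [B]

theorem IntervalIntegrable.mul_exp_integral (hb : IntervalIntegrable b volume a t) :
    IntervalIntegrable (fun s => b s * Real.exp (∫ u in a..s, b u)) volume a t :=
  hb.mul_continuousOn (continuousOn_primitive_interval' hb left_mem_uIcc).rexp

theorem abs_exp_neg_integral_mul_integral_le {I : ℝ → ℝ} {M : ℝ} (hat : a ≤ t)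
    (hb : IntervalIntegrable b volume a t) (hb0 : ∀ s, 0 ≤ b s) (hI : ∀ s, |I s| ≤ M) :
    |Real.exp (-∫ u in a..t, b u) * ∫ s in a..t, b s * Real.exp (∫ u in a..s, b u) * I s|
      ≤ (1 - Real.exp (-∫ u in a..t, b u)) * M := by
  have hint : |∫ s in a..t, b s * Real.exp (∫ u in a..s, b u) * I s|
      ≤ (Real.exp (∫ u in a..t, b u) - 1) * M :=
    calc _ ≤ ∫ s in a..t, b s * Real.exp (∫ u in a..s, b u) * M := by
          rw [← Real.norm_eq_abs]
          refine norm_integral_le_of_norm_le hat (ae_of_all _ fun s _ => ?_)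
            (hb.mul_exp_integral.mul_const M)
          have hw : 0 ≤ b s * Real.exp (∫ u in a..s, b u) := mul_nonneg (hb0 s) (Real.exp_pos _).le
          rw [Real.norm_eq_abs, abs_mul, abs_of_nonneg hw]
          exact mul_le_mul_of_nonneg_left (hI s) hw
      _ = _ := by rw [intervalIntegral.integral_mul_const, integral_mul_exp_integral hb]
  rw [abs_mul, abs_of_pos (Real.exp_pos _)]
  calc _ ≤ Real.exp (-∫ u in a..t, b u) * ((Real.exp (∫ u in a..t, b u) - 1) * M) := by gcongr
    _ = _ := by rw [Real.exp_neg]; field_simp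

end WeightedIntegral

noncomputable def shiftedKernelIntegral (T : ℝ) (K : Kernel ℝ ℝ) (f : ℝ → ℝ) (s : ℝ) : ℝ :=
  ∫ v in Ico (0:ℝ) (T - s), f (s + v) ∂(K s)

section ShiftedKernelIntegral

variable {T s M N : ℝ} {K : Kernel ℝ ℝ} {f g : ℝ → ℝ}

theorem stronglyMeasurable_shiftedKernelIntegral [IsSFiniteKernel K] (hf : Measurable f) :
    StronglyMeasurable (shiftedKernelIntegral T K f) := by
  have hind : shiftedKernelIntegral T K f = fun s => ∫ v,
      {p : ℝ × ℝ | p.2 ∈ Ico 0 (T - p.1)}.indicator (fun p => f (p.1 + p.2)) (s, v) ∂K s := by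
    ext s
    rw [shiftedKernelIntegral, ← MeasureTheory.integral_indicator measurableSet_Ico]
    rfl
  rw [hind]
  refine StronglyMeasurable.integral_kernel_prod_right' (StronglyMeasurable.indicator
    (hf.comp measurable_add).stronglyMeasurable ?_)
  exact (measurableSet_le measurable_const measurable_snd).inter
    (measurableSet_lt measurable_snd (measurable_const.sub measurable_fst))

theorem abs_shiftedKernelIntegral_le [IsMarkovKernel K] (hf : ∀ x, |f x| ≤ M) (s : ℝ) :
    |shiftedKernelIntegral T K f s| ≤ M := by
  rw [← Real.norm_eq_abs]
  exact (norm_setIntegral_le_of_norm_le_const (measure_lt_top _ _) fun v _ => hf (s + v)).trans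
      (mul_le_of_le_one_right ((abs_nonneg _).trans (hf 0)) measureReal_le_one)

theorem shiftedKernelIntegral_nonneg (hf : ∀ x, 0 ≤ f x) : 0 ≤ shiftedKernelIntegral T K f s :=
  setIntegral_nonneg measurableSet_Ico fun v _ => hf (s + v)

theorem shiftedKernelIntegral_congr (hfg : EqOn f g (Icc 0 T)) (hs : 0 ≤ s) :
    shiftedKernelIntegral T K f s = shiftedKernelIntegral T K g s :=
  setIntegral_congr_fun measurableSet_Ico fun v hv =>
    hfg ⟨add_nonneg hs hv.1, by linarith [hv.2]⟩

theorem shiftedKernelIntegral_sub [IsFiniteKernel K] (hf : Measurable f) (hg : Measurable g)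
    (hfM : ∀ x, |f x| ≤ M) (hgN : ∀ x, |g x| ≤ N) :
    shiftedKernelIntegral T K f s - shiftedKernelIntegral T K g s
      = shiftedKernelIntegral T K (f - g) s := by
  have hint {h : ℝ → ℝ} {C : ℝ} (hh : Measurable h) (hC : ∀ x, |h x| ≤ C) :
      Integrable (fun v => h (s + v)) ((K s).restrict (Ico 0 (T - s))) :=
    .of_bound (hh.comp (measurable_const_add s)).aestronglyMeasurable C (ae_of_all _ fun v => hC _)
  exact (integral_sub (hint hf hfM) (hint hg hgN)).symm

end ShiftedKernelIntegral

section ScaleMap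

variable {T t M N : ℝ} {b : ℝ → ℝ} {K : Kernel ℝ ℝ} {f g : ℝ → ℝ}

theorem scaleMap_eq : scaleMap T b K f t = Real.exp (-∫ u in (0:ℝ)..t, b u) +
    Real.exp (-∫ u in (0:ℝ)..t, b u) *
      ∫ s in (0:ℝ)..t, b s * Real.exp (∫ u in (0:ℝ)..s, b u) * shiftedKernelIntegral T K f s :=
  rfl

theorem scaleMap_zero : scaleMap T b K f 0 = 1 := by
  simp [scaleMap]

theorem scaleMap_congr (hfg : EqOn f g (Icc 0 T)) (ht : 0 ≤ t) :
    scaleMap T b K f t = scaleMap T b K g t := by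
  have hint : EqOn (fun s => b s * Real.exp (∫ u in (0:ℝ)..s, b u) * shiftedKernelIntegral T K f s)
      (fun s => b s * Real.exp (∫ u in (0:ℝ)..s, b u) * shiftedKernelIntegral T K g s)
      (uIcc 0 t) := fun s hs => by
    dsimp only
    rw [shiftedKernelIntegral_congr hfg (uIcc_of_le ht ▸ hs).1]
  rw [scaleMap_eq, scaleMap_eq, integral_congr hint]

theorem IntervalIntegrable.mul_exp_integral_mul_shiftedKernelIntegral [IsMarkovKernel K]
    (hb : IntervalIntegrable b volume 0 t) (hf : Measurable f) (hfM : ∀ x, |f x| ≤ M) :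
    IntervalIntegrable
      (fun s => b s * Real.exp (∫ u in (0:ℝ)..s, b u) * shiftedKernelIntegral T K f s) volume 0 t :=
  intervalIntegrable_iff.2 <| Integrable.mul_bdd (intervalIntegrable_iff.1 hb.mul_exp_integral)
    (stronglyMeasurable_shiftedKernelIntegral hf).aestronglyMeasurable
    (ae_of_all _ fun s => abs_shiftedKernelIntegral_le hfM s)

theorem continuousOn_scaleMap [IsMarkovKernel K] (hT : 0 ≤ T)
    (hb : IntervalIntegrable b volume 0 T) (hf : Measurable f) (hfM : ∀ x, |f x| ≤ M) :
    ContinuousOn (scaleMap T b K f) (Icc 0 T) := by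
  have hB := continuousOn_primitive_interval' hb left_mem_uIcc
  have hI := continuousOn_primitive_interval'
    (hb.mul_exp_integral_mul_shiftedKernelIntegral (T := T) (K := K) hf hfM) left_mem_uIcc
  rw [← uIcc_of_le hT]
  exact hB.neg.rexp.add (hB.neg.rexp.mul hI)

theorem scaleMap_mem_Icc [IsMarkovKernel K] (ht : 0 ≤ t) (hb : IntervalIntegrable b volume 0 t)
    (hb0 : ∀ x, 0 ≤ b x) (hf : ∀ x, f x ∈ Icc 0 1) : scaleMap T b K f t ∈ Icc 0 1 := by
  have hI : ∀ s, |shiftedKernelIntegral T K f s| ≤ 1 := abs_shiftedKernelIntegral_le fun x =>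
    abs_le.2 ⟨by linarith [(hf x).1], (hf x).2⟩
  have hbound := abs_exp_neg_integral_mul_integral_le ht hb hb0 hI
  have hnonneg : 0 ≤ Real.exp (-∫ u in (0:ℝ)..t, b u) *
      ∫ s in (0:ℝ)..t, b s * Real.exp (∫ u in (0:ℝ)..s, b u) * shiftedKernelIntegral T K f s :=
    mul_nonneg (Real.exp_pos _).le (integral_nonneg ht fun s _ =>
      mul_nonneg (mul_nonneg (hb0 s) (Real.exp_pos _).le)
        (shiftedKernelIntegral_nonneg fun x => (hf x).1))
  rw [abs_of_nonneg hnonneg, mul_one] at hbound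
  rw [scaleMap_eq]
  constructor <;> linarith [Real.exp_pos (-∫ u in (0:ℝ)..t, b u)]

theorem abs_scaleMap_sub_le [IsMarkovKernel K] (ht : 0 ≤ t) (hb : IntervalIntegrable b volume 0 t)
    (hb0 : ∀ x, 0 ≤ b x) (hf : Measurable f) (hg : Measurable g) (hfM : ∀ x, |f x| ≤ M)
    (hgN : ∀ x, |g x| ≤ N) {D : ℝ} (hfg : ∀ x, |f x - g x| ≤ D) :
    |scaleMap T b K f t - scaleMap T b K g t| ≤ D := by
  have hdiff : ∀ s, b s * Real.exp (∫ u in (0:ℝ)..s, b u) * shiftedKernelIntegral T K f s -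
      b s * Real.exp (∫ u in (0:ℝ)..s, b u) * shiftedKernelIntegral T K g s =
      b s * Real.exp (∫ u in (0:ℝ)..s, b u) * shiftedKernelIntegral T K (f - g) s := fun s => by
    rw [← mul_sub, shiftedKernelIntegral_sub hf hg hfM hgN]
  rw [scaleMap_eq, scaleMap_eq, add_sub_add_left_eq_sub, ← mul_sub,
    ← integral_sub (hb.mul_exp_integral_mul_shiftedKernelIntegral hf hfM)
      (hb.mul_exp_integral_mul_shiftedKernelIntegral hg hgN)]
  simp only [hdiff]
  refine (abs_exp_neg_integral_mul_integral_le ht hb hb0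
    (abs_shiftedKernelIntegral_le (f := f - g) hfg)).trans ?_
  have hD : 0 ≤ D := (abs_nonneg _).trans (hfg 0)
  nlinarith [Real.exp_pos (-∫ u in (0:ℝ)..t, b u)]

end ScaleMap

theorem stmt_1_general
    (T : ℝ) (hT : 0 < T)
    (b : ℝ → ℝ) (hb_meas : Measurable b) (hb_nonneg : ∀ x, 0 ≤ b x)
    (hb_bdd : ∃ C : ℝ, ∀ x ∈ Set.Icc (0:ℝ) T, b x ≤ C)
    (K : Kernel ℝ ℝ) [IsMarkovKernel K] :
    (∀ S : ℝ → ℝ, ContinuousOn S (Set.Icc 0 T) → S 0 = 1 →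
      (∀ t ∈ Set.Icc (0:ℝ) T, S t ∈ Set.Icc (0:ℝ) 1) →
      ContinuousOn (scaleMap T b K S) (Set.Icc 0 T) ∧ scaleMap T b K S 0 = 1 ∧
        ∀ t ∈ Set.Icc (0:ℝ) T, scaleMap T b K S t ∈ Set.Icc (0:ℝ) 1) ∧
    (∀ S₁ S₂ : ℝ → ℝ, ContinuousOn S₁ (Set.Icc 0 T) → ContinuousOn S₂ (Set.Icc 0 T) →
      ⨆ t : Set.Icc (0:ℝ) T, |scaleMap T b K S₁ ↑t - scaleMap T b K S₂ ↑t| ≤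
        ⨆ t : Set.Icc (0:ℝ) T, |S₁ ↑t - S₂ ↑t|) := by
  obtain ⟨C, hC⟩ := hb_bdd
  have hbt (t : ℝ) (ht : t ∈ Icc 0 T) : IntervalIntegrable b volume 0 t :=
    hb_meas.intervalIntegrable_of_nonneg_of_le hb_nonneg hC ht
  -- `scaleMap` only sees `S` on `[0,T]`; extending `S` constantly outside makes it measurable.
  let ext : (ℝ → ℝ) → ℝ → ℝ := fun S => IccExtend hT.le ((Icc 0 T).domRestrict S)
  have ext_eqOn (S : ℝ → ℝ) : EqOn S (ext S) (Icc 0 T) := fun x hx =>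
    (IccExtend_of_mem hT.le ((Icc 0 T).domRestrict S) hx).symm
  have measurable_ext {S : ℝ → ℝ} (hS : ContinuousOn S (Icc 0 T)) : Measurable (ext S) :=
    hS.domRestrict.Icc_extend'.measurable
  refine ⟨fun S hS _ hS01 => ?_, fun S₁ S₂ hS₁ hS₂ => ?_⟩
  · have hext01 (x : ℝ) : ext S x ∈ Icc 0 1 := hS01 _ (projIcc 0 T hT.le x).2
    have hext_abs (x : ℝ) : |ext S x| ≤ 1 := abs_le.2 ⟨by linarith [(hext01 x).1], (hext01 x).2⟩
    refine ⟨?_, scaleMap_zero, fun t ht => ?_⟩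
    · exact (continuousOn_scaleMap hT.le (hbt T (right_mem_Icc.2 hT.le)) (measurable_ext hS)
        hext_abs).congr fun t ht => scaleMap_congr (ext_eqOn S) ht.1
    · rw [scaleMap_congr (ext_eqOn S) ht.1]
      exact scaleMap_mem_Icc ht.1 (hbt t ht) hb_nonneg hext01
  · obtain ⟨R₁, hR₁⟩ := isCompact_Icc.exists_bound_of_continuousOn hS₁
    obtain ⟨R₂, hR₂⟩ := isCompact_Icc.exists_bound_of_continuousOn hS₂
    have hbdd : BddAbove (range fun t : Icc 0 T => |S₁ t - S₂ t|) := by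
      rw [← image_eq_range (fun x => |S₁ x - S₂ x|)]
      exact isCompact_Icc.bddAbove_image (hS₁.sub hS₂).abs
    refine Real.iSup_le (fun t => ?_) (Real.iSup_nonneg fun _ => abs_nonneg _)
    rw [scaleMap_congr (ext_eqOn S₁) t.2.1, scaleMap_congr (ext_eqOn S₂) t.2.1]
    exact abs_scaleMap_sub_le t.2.1 (hbt t t.2) hb_nonneg (measurable_ext hS₁) (measurable_ext hS₂)
      (fun x => hR₁ _ (projIcc 0 T hT.le x).2) (fun x => hR₂ _ (projIcc 0 T hT.le x).2)
      fun x => le_ciSup hbdd (projIcc 0 T hT.le x)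

/-- **Invariance and nonexpansiveness of the fixed-point map `𝒜`** (key step of Theorem 4.1):
(i) `𝒜` preserves the set of continuous `S : [0,T] → [0,1]` with `S 0 = 1`;
(ii) `𝒜` is nonexpansive for the supremum norm on `[0,T]`. -/
theorem stmt_1
    (T : ℝ) (hT : 0 < T)
    (b : ℝ → ℝ) (hb_meas : Measurable b) (hb_nonneg : ∀ x, 0 ≤ b x)
    (hb_bdd : ∃ C : ℝ, ∀ x ∈ Set.Icc (0:ℝ) T, b x ≤ C)
    (K : Kernel ℝ ℝ) [IsMarkovKernel K]
    (hK_supp : ∀ x : ℝ, (K x) (Set.Iio 0) = 0) :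
    (∀ S : ℝ → ℝ, ContinuousOn S (Set.Icc 0 T) → S 0 = 1 →
      (∀ t ∈ Set.Icc (0:ℝ) T, S t ∈ Set.Icc (0:ℝ) 1) →
      ContinuousOn (scaleMap T b K S) (Set.Icc 0 T) ∧ scaleMap T b K S 0 = 1 ∧
        ∀ t ∈ Set.Icc (0:ℝ) T, scaleMap T b K S t ∈ Set.Icc (0:ℝ) 1) ∧
    (∀ S₁ S₂ : ℝ → ℝ, ContinuousOn S₁ (Set.Icc 0 T) → ContinuousOn S₂ (Set.Icc 0 T) →
      ⨆ t : Set.Icc (0:ℝ) T, |scaleMap T b K S₁ ↑t - scaleMap T b K S₂ ↑t| ≤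
        ⨆ t : Set.Icc (0:ℝ) T, |S₁ ↑t - S₂ ↑t|) :=
  stmt_1_general T hT b hb_meas hb_nonneg hb_bdd K
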